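/- arXiv:1303.2429 — 3 statements merged into one kernel-verified Lean document; each statement's English description precedes it below -/
import Mathlib

section
/- Let f be the quotient of the free twisted bialgebra 'f by the radical of the bilinear form (,). For each i ∈ I, let r_i: f → f be the unique linear map with r_i(1)=0, r_i(θ_j)=δ_{ij}, and r_i(xy) = v^{-i·|y|} t^{⟨|y|,i⟩-⟨i,|y|⟩} r_i(x)y + x r_i(y) on homogeneous x, y. If x ∈ f_ν with ν ≠ 0 and r_i(x) = 0 for all i ∈ I, then x = 0. -/
/-!
STATEMENT 10: In the two-parameter algebra f (the quotient of the free twisted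
bialgebra by the radical of the bilinear form), if x ∈ f_ν with ν ≠ 0 and
r_i(x) = 0 for all i ∈ I, then x = 0.

f is axiomatised: an ℕ^I-graded associative ℚ(v,t)-algebra generated by
elements θ_i of degree i, equipped with a nondegenerate bilinear form (,)
satisfying the adjunction (yθ_i, x) = t^{2[|y|,i]}(y, r_i(x))(θ_i,θ_i), and
linear maps r_i with r_i(1)=0, r_i(θ_j)=δ_{ij} and the twisted derivation rule
r_i(xy) = v^{-i·|y|} t^{⟨|y|,i⟩-⟨i,|y|⟩} r_i(x)y + x r_i(y).
-/

noncomputable section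
set_option linter.unusedSectionVars false

abbrev QVT := FractionRing (MvPolynomial (Fin 2) ℚ)

def v : QVT := algebraMap (MvPolynomial (Fin 2) ℚ) QVT (MvPolynomial.X 0)

def t : QVT := algebraMap (MvPolynomial (Fin 2) ℚ) QVT (MvPolynomial.X 1)

def pairF {I : Type*} (C : I → I → ℤ) (a b : I →₀ ℕ) : ℤ :=
  a.sum fun i m => b.sum fun j n => (m : ℤ) * C i j * (n : ℤ)

def dotF {I : Type*} (C : I → I → ℤ) (a b : I →₀ ℕ) : ℤ :=
  pairF C a b + pairF C b a

def Dmat {I : Type*} [DecidableEq I] (C : I → I → ℤ) (i j : I) : ℤ :=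
  (if i = j then 2 * C i i else 0) - C i j

namespace Vanish10

lemma v_ne : v ≠ 0 := by
  intro hv
  exact MvPolynomial.X_ne_zero (R := ℚ) 0
    (IsFractionRing.injective (MvPolynomial (Fin 2) ℚ) QVT (by rw [map_zero]; exact hv))

lemma t_ne : t ≠ 0 := by
  intro ht
  exact MvPolynomial.X_ne_zero (R := ℚ) 1
    (IsFractionRing.injective (MvPolynomial (Fin 2) ℚ) QVT (by rw [map_zero]; exact ht))

lemma t_split (b₁ b₂ : ℤ) : t ^ (b₁ + b₂) = t ^ b₁ * t ^ b₂ := zpow_add₀ t_ne _ _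

lemma vt_split (a₁ a₂ b₁ b₂ : ℤ) :
    (v ^ (a₁ + a₂) * t ^ (b₁ + b₂) : QVT) = (v ^ a₁ * t ^ b₁) * (v ^ a₂ * t ^ b₂) := by
  rw [zpow_add₀ v_ne, zpow_add₀ t_ne]; ring

variable {I : Type*} [DecidableEq I]

section pairs

variable (M : I → I → ℤ)

lemma pairF_zero_left (b : I →₀ ℕ) : pairF M 0 b = 0 := by
  simp [pairF]

lemma pairF_zero_right (a : I →₀ ℕ) : pairF M a 0 = 0 := by
  simp [pairF]

lemma pairF_add_left (a₁ a₂ b : I →₀ ℕ) :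
    pairF M (a₁ + a₂) b = pairF M a₁ b + pairF M a₂ b := by
  unfold pairF
  rw [Finsupp.sum_add_index']
  · intro i; simp
  · intro i m₁ m₂
    rw [← Finsupp.sum_add]
    apply Finsupp.sum_congr
    intro j _; push_cast; ring

lemma pairF_add_right (a b₁ b₂ : I →₀ ℕ) :
    pairF M a (b₁ + b₂) = pairF M a b₁ + pairF M a b₂ := by
  unfold pairF
  rw [← Finsupp.sum_add]
  apply Finsupp.sum_congr
  intro i _
  rw [Finsupp.sum_add_index']
  · intro j; simp
  · intro j n₁ n₂; push_cast; ring

lemma pairF_single_left (j : I) (b : I →₀ ℕ) :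
    pairF M (Finsupp.single j 1) b = b.sum fun k n => M j k * (n : ℤ) := by
  unfold pairF
  rw [Finsupp.sum_single_index]
  · apply Finsupp.sum_congr; intro k _; push_cast; ring
  · simp

lemma pairF_single_right (a : I →₀ ℕ) (j : I) :
    pairF M a (Finsupp.single j 1) = a.sum fun i m => (m : ℤ) * M i j := by
  unfold pairF
  apply Finsupp.sum_congr
  intro i _
  rw [Finsupp.sum_single_index] <;> simp

end pairs

variable (C : I → I → ℤ)

lemma pairD_left (j : I) (d : I →₀ ℕ) :
    pairF (Dmat C) (Finsupp.single j 1) d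
      = 2 * C j j * (d j : ℤ) - pairF C (Finsupp.single j 1) d := by
  rw [pairF_single_left, pairF_single_left]
  unfold Dmat
  rw [show (d.sum fun k n => ((if j = k then 2 * C j j else 0) - C j k) * (n : ℤ))
      = d.sum fun k n => ((if j = k then 2 * C j j * (n : ℤ) else 0) - C j k * (n : ℤ)) from
    Finsupp.sum_congr fun k _ => by split <;> ring]
  rw [Finsupp.sum_sub]
  congr 1
  rw [Finsupp.sum_ite_eq]
  split
  · rfl
  · next h => rw [Finsupp.notMem_support_iff.mp h]; ring

lemma pairD_right (d : I →₀ ℕ) (j : I) :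
    pairF (Dmat C) d (Finsupp.single j 1)
      = 2 * C j j * (d j : ℤ) - pairF C d (Finsupp.single j 1) := by
  rw [pairF_single_right, pairF_single_right]
  unfold Dmat
  rw [show (d.sum fun i m => (m : ℤ) * ((if i = j then 2 * C i i else 0) - C i j))
      = d.sum fun i m => ((if i = j then 2 * C j j * (m : ℤ) else 0) - (m : ℤ) * C i j) from
    Finsupp.sum_congr fun i _ => by split <;> [(next h => subst h; ring); ring]]
  rw [Finsupp.sum_sub]
  congr 1
  rw [Finsupp.sum_ite_eq']
  split
  · rfl
  · next h => rw [Finsupp.notMem_support_iff.mp h]; ring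

lemma key_exch (j : I) (d : I →₀ ℕ) :
    pairF (Dmat C) (Finsupp.single j 1) d + pairF C (Finsupp.single j 1) d
      = pairF (Dmat C) d (Finsupp.single j 1) + pairF C d (Finsupp.single j 1) := by
  rw [pairD_left, pairD_right]; ring

/-- the scalar in the twisted derivation rule -/
def qc (i : I) (b : I →₀ ℕ) : QVT :=
  v ^ (-(dotF C (Finsupp.single i 1) b))
    * t ^ (pairF C b (Finsupp.single i 1) - pairF C (Finsupp.single i 1) b)

/-- the bar-twisted scalar -/
def qb (i : I) (b : I →₀ ℕ) : QVT :=
  v ^ (dotF C (Finsupp.single i 1) b)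
    * t ^ (pairF C b (Finsupp.single i 1) - pairF C (Finsupp.single i 1) b)

lemma qc_ne (i : I) (b : I →₀ ℕ) : qc C i b ≠ 0 :=
  mul_ne_zero (zpow_ne_zero _ v_ne) (zpow_ne_zero _ t_ne)

lemma qb_ne (i : I) (b : I →₀ ℕ) : qb C i b ≠ 0 :=
  mul_ne_zero (zpow_ne_zero _ v_ne) (zpow_ne_zero _ t_ne)

lemma qc_zero (i : I) : qc C i 0 = 1 := by
  simp [qc, dotF, pairF_zero_left, pairF_zero_right]

lemma qb_zero (i : I) : qb C i 0 = 1 := by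
  simp [qb, dotF, pairF_zero_left, pairF_zero_right]

lemma qc_add (i : I) (b c : I →₀ ℕ) : qc C i (b + c) = qc C i b * qc C i c := by
  unfold qc
  rw [show -(dotF C (Finsupp.single i 1) (b + c))
      = -(dotF C (Finsupp.single i 1) b) + -(dotF C (Finsupp.single i 1) c) from by
    simp only [dotF, pairF_add_left, pairF_add_right]; ring]
  rw [show pairF C (b + c) (Finsupp.single i 1) - pairF C (Finsupp.single i 1) (b + c)
      = (pairF C b (Finsupp.single i 1) - pairF C (Finsupp.single i 1) b)
        + (pairF C c (Finsupp.single i 1) - pairF C (Finsupp.single i 1) c) from by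
    simp only [pairF_add_left, pairF_add_right]; ring]
  exact vt_split _ _ _ _

lemma qb_add (i : I) (b c : I →₀ ℕ) : qb C i (b + c) = qb C i b * qb C i c := by
  unfold qb
  rw [show dotF C (Finsupp.single i 1) (b + c)
      = dotF C (Finsupp.single i 1) b + dotF C (Finsupp.single i 1) c from by
    simp only [dotF, pairF_add_left, pairF_add_right]; ring]
  rw [show pairF C (b + c) (Finsupp.single i 1) - pairF C (Finsupp.single i 1) (b + c)
      = (pairF C b (Finsupp.single i 1) - pairF C (Finsupp.single i 1) b)
        + (pairF C c (Finsupp.single i 1) - pairF C (Finsupp.single i 1) c) from by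
    simp only [pairF_add_left, pairF_add_right]; ring]
  exact vt_split _ _ _ _

lemma qb_mul_qc (i : I) (d : I →₀ ℕ) :
    qb C i d * qc C i d
      = t ^ (2 * (pairF C d (Finsupp.single i 1) - pairF C (Finsupp.single i 1) d)) := by
  unfold qb qc
  rw [show (2 * (pairF C d (Finsupp.single i 1) - pairF C (Finsupp.single i 1) d))
      = (pairF C d (Finsupp.single i 1) - pairF C (Finsupp.single i 1) d)
        + (pairF C d (Finsupp.single i 1) - pairF C (Finsupp.single i 1) d) from by ring]
  rw [t_split]
  have hv : (v : QVT) ^ (dotF C (Finsupp.single i 1) d)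
      * v ^ (-(dotF C (Finsupp.single i 1) d)) = 1 := by
    rw [← zpow_add₀ v_ne]; simp
  calc (v ^ (dotF C (Finsupp.single i 1) d)
          * t ^ (pairF C d (Finsupp.single i 1) - pairF C (Finsupp.single i 1) d))
        * (v ^ (-(dotF C (Finsupp.single i 1) d))
          * t ^ (pairF C d (Finsupp.single i 1) - pairF C (Finsupp.single i 1) d))
      = (v ^ (dotF C (Finsupp.single i 1) d) * v ^ (-(dotF C (Finsupp.single i 1) d)))
        * (t ^ (pairF C d (Finsupp.single i 1) - pairF C (Finsupp.single i 1) d)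
          * t ^ (pairF C d (Finsupp.single i 1) - pairF C (Finsupp.single i 1) d)) := by ring
    _ = _ := by rw [hv, one_mul]

lemma qb_qc_inv (i j : I) : qb C j (Finsupp.single i 1) * qc C i (Finsupp.single j 1) = 1 := by
  unfold qb qc
  have hd : dotF C (Finsupp.single j 1) (Finsupp.single i 1)
      = dotF C (Finsupp.single i 1) (Finsupp.single j 1) := by
    unfold dotF; ring
  rw [hd]
  calc (v ^ (dotF C (Finsupp.single i 1) (Finsupp.single j 1))
        * t ^ (pairF C (Finsupp.single i 1) (Finsupp.single j 1)
            - pairF C (Finsupp.single j 1) (Finsupp.single i 1)))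
      * (v ^ (-(dotF C (Finsupp.single i 1) (Finsupp.single j 1)))
        * t ^ (pairF C (Finsupp.single j 1) (Finsupp.single i 1)
            - pairF C (Finsupp.single i 1) (Finsupp.single j 1)))
      = (v ^ (dotF C (Finsupp.single i 1) (Finsupp.single j 1))
          * v ^ (-(dotF C (Finsupp.single i 1) (Finsupp.single j 1))))
        * (t ^ (pairF C (Finsupp.single i 1) (Finsupp.single j 1)
            - pairF C (Finsupp.single j 1) (Finsupp.single i 1))
          * t ^ (pairF C (Finsupp.single j 1) (Finsupp.single i 1)
            - pairF C (Finsupp.single i 1) (Finsupp.single j 1))) := by ring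
    _ = 1 := by
        rw [← zpow_add₀ v_ne, ← zpow_add₀ t_ne]
        simp


/-! ## Words -/

def degw : List I → (I →₀ ℕ)
  | [] => 0
  | i :: m => Finsupp.single i 1 + degw m

lemma degw_append (m₁ m₂ : List I) : degw (m₁ ++ m₂) = degw m₁ + degw m₂ := by
  induction m₁ with
  | nil => simp [degw]
  | cons k u ih => simp [degw, ih, add_assoc]

lemma degw_eq_zero {m : List I} (h : degw m = 0) : m = [] := by
  cases m with
  | nil => rfl
  | cons k u =>
    exfalso
    have := DFunLike.congr_fun h k
    simp [degw, Finsupp.single_apply] at this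

lemma degw_eq_single {m : List I} {j : I} (h : degw m = Finsupp.single j 1) : m = [j] := by
  cases m with
  | nil =>
    exfalso
    exact one_ne_zero (Finsupp.single_eq_zero.mp h.symm)
  | cons k u =>
    have hk := DFunLike.congr_fun h k
    simp only [degw, Finsupp.add_apply, Finsupp.single_apply, eq_self_iff_true,
      if_true] at hk
    have hjk : j = k := by
      by_contra hne
      rw [if_neg hne] at hk
      omega
    subst hjk
    have hu : degw u = 0 := by
      have : Finsupp.single j 1 + degw u = Finsupp.single j 1 + 0 := by
        rw [add_zero]; exact h
      exact add_left_cancel this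
    rw [degw_eq_zero hu]

variable {A : Type*} [Ring A] [Algebra QVT A]

def Θw (θ : I → A) : List I → A
  | [] => 1
  | i :: m => θ i * Θw θ m

lemma Θw_append (θ : I → A) (m₁ m₂ : List I) :
    Θw θ (m₁ ++ m₂) = Θw θ m₁ * Θw θ m₂ := by
  induction m₁ with
  | nil => simp [Θw]
  | cons k u ih => simp [Θw, ih, mul_assoc]

lemma Θw_mem (𝒜 : (I →₀ ℕ) → Submodule QVT A) [GradedAlgebra 𝒜] (θ : I → A)
    (hθ : ∀ i, θ i ∈ 𝒜 (Finsupp.single i 1)) (m : List I) :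
    Θw θ m ∈ 𝒜 (degw m) := by
  induction m with
  | nil => exact SetLike.one_mem_graded 𝒜
  | cons k u ih => exact SetLike.mul_mem_graded (hθ k) ih

def Rw (ri : I → (A →ₗ[QVT] A)) : List I → A →ₗ[QVT] A
  | [] => LinearMap.id
  | i :: m => (ri i).comp (Rw ri m)

@[simp] lemma Rw_nil (ri : I → (A →ₗ[QVT] A)) (z : A) : Rw ri [] z = z := rfl
@[simp] lemma Rw_cons (ri : I → (A →ₗ[QVT] A)) (i : I) (m : List I) (z : A) :
    Rw ri (i :: m) z = ri i (Rw ri m z) := rfl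

lemma Rw_append_single (ri : I → (A →ₗ[QVT] A)) (m : List I) (i : I) (z : A) :
    Rw ri (m ++ [i]) z = Rw ri m (ri i z) := by
  induction m with
  | nil => rfl
  | cons k u ih => simp [ih]

lemma Rw_one (ri : I → (A →ₗ[QVT] A)) (hri1 : ∀ i, ri i 1 = 0) (i : I) (m : List I) :
    Rw ri (i :: m) (1 : A) = 0 := by
  induction m generalizing i with
  | nil => exact hri1 i
  | cons k u ih => rw [Rw_cons, ih k, map_zero]

/-! ## Formal combinations -/

def consF (k : I) : (List I →₀ QVT) →ₗ[QVT] (List I →₀ QVT) :=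
  Finsupp.lmapDomain QVT QVT (k :: ·)

@[simp] lemma consF_single (k : I) (m : List I) (c : QVT) :
    consF k (Finsupp.single m c) = Finsupp.single (k :: m) c := by
  simp [consF, Finsupp.lmapDomain_apply, Finsupp.mapDomain_single]

def remW (wgt : I → (I →₀ ℕ) → QVT) (i : I) : List I → (List I →₀ QVT)
  | [] => 0
  | k :: u => (if i = k then wgt i (degw u) • Finsupp.single u (1 : QVT) else 0)
      + consF k (remW wgt i u)

def remF (wgt : I → (I →₀ ℕ) → QVT) (i : I) : (List I →₀ QVT) →ₗ[QVT] (List I →₀ QVT) :=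
  Finsupp.linearCombination QVT (remW wgt i)

@[simp] lemma remF_single (wgt : I → (I →₀ ℕ) → QVT) (i : I) (m : List I) (c : QVT) :
    remF wgt i (Finsupp.single m c) = c • remW wgt i m :=
  Finsupp.linearCombination_single _ _ _

def itF (wgt : I → (I →₀ ℕ) → QVT) : List I → (List I →₀ QVT) → (List I →₀ QVT)
  | [], f => f
  | i :: L, f => remF wgt i (itF wgt L f)

@[simp] lemma itF_nil (wgt) (f : List I →₀ QVT) : itF wgt [] f = f := rfl
@[simp] lemma itF_cons (wgt) (i : I) (L : List I) (f : List I →₀ QVT) :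
    itF wgt (i :: L) f = remF wgt i (itF wgt L f) := rfl

lemma itF_zero (wgt) (L : List I) : itF wgt L (0 : List I →₀ QVT) = 0 := by
  induction L with
  | nil => rfl
  | cons i L ih => simp [ih]

lemma itF_append_single (wgt) (L : List I) (j : I) (f : List I →₀ QVT) :
    itF wgt (L ++ [j]) f = itF wgt L (remF wgt j f) := by
  induction L with
  | nil => rfl
  | cons i L ih => simp [ih]

/-- two linear maps agree on `f` if they agree on singles from its support -/
lemma eq_on_singles {N : Type*} [AddCommMonoid N] [Module QVT N]
    (L₁ L₂ : (List I →₀ QVT) →ₗ[QVT] N) (f : List I →₀ QVT)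
    (h : ∀ m ∈ f.support, ∀ c : QVT,
      L₁ (Finsupp.single m c) = L₂ (Finsupp.single m c)) : L₁ f = L₂ f := by
  rw [← Finsupp.sum_single f, map_finsuppSum, map_finsuppSum]
  exact Finsupp.sum_congr fun m hm => h m hm _

/-! ## Support lemmas -/

lemma remW_support (wgt : I → (I →₀ ℕ) → QVT) (i : I) :
    ∀ (m : List I), ∀ m' ∈ (remW wgt i m).support,
      Finsupp.single i 1 + degw m' = degw m := by
  intro m
  induction m with
  | nil => intro m' hm'; simp [remW] at hm'
  | cons k u ih =>
    intro m' hm'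
    rcases Finset.mem_union.mp (Finsupp.support_add hm') with h | h
    · by_cases hik : i = k
      · rw [if_pos hik] at h
        have h2 := Finsupp.support_smul h
        have hmu : m' = u := Finset.mem_singleton.mp (Finsupp.support_single_subset h2)
        subst hmu; subst hik; rfl
      · rw [if_neg hik] at h; simp at h
    · rw [consF, Finsupp.lmapDomain_apply] at h
      rcases Finset.mem_image.mp (Finsupp.mapDomain_support h) with ⟨m'', hm'', rfl⟩
      have := ih m'' hm''
      show Finsupp.single i 1 + (Finsupp.single k 1 + degw m'')
          = Finsupp.single k 1 + degw u
      rw [← this, add_left_comm]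

lemma remW_vanish (wgt : I → (I →₀ ℕ) → QVT) (i : I) :
    ∀ (m : List I), degw m i = 0 → remW wgt i m = 0 := by
  intro m
  induction m with
  | nil => intro _; rfl
  | cons k u ih =>
    intro h
    simp only [degw, Finsupp.add_apply, Finsupp.single_apply, Nat.add_eq_zero] at h
    obtain ⟨h1, h2⟩ := h
    have hik : ¬ (i = k) := by
      intro he; subst he; simp at h1
    rw [remW, if_neg hik, zero_add, ih h2, map_zero]

lemma remF_support (wgt : I → (I →₀ ℕ) → QVT) (i : I) {d : I →₀ ℕ}
    (f : List I →₀ QVT) (hf : ∀ m ∈ f.support, degw m = d) :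
    ∀ m' ∈ (remF wgt i f).support, Finsupp.single i 1 + degw m' = d := by
  intro m' hm'
  rw [remF, Finsupp.linearCombination_apply] at hm'
  classical
  rcases Finset.mem_biUnion.mp (Finsupp.support_sum hm') with ⟨m, hm, hmem⟩
  have := remW_support wgt i m m' (Finsupp.support_smul hmem)
  rw [this, hf m hm]

lemma itF_support (wgt : I → (I →₀ ℕ) → QVT) (L : List I) {μ : I →₀ ℕ}
    (f : List I →₀ QVT) (hf : ∀ m ∈ f.support, degw m = μ) :
    ∀ m' ∈ (itF wgt L f).support, degw L + degw m' = μ := by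
  induction L generalizing f μ with
  | nil => intro m' hm'; rw [show degw ([] : List I) = 0 from rfl, zero_add]; exact hf m' hm'
  | cons i L ih =>
    intro m' hm'
    have hih := ih f hf
    by_cases hne : (itF wgt L f).support = ∅
    · exfalso
      rw [itF_cons, Finsupp.support_eq_empty.mp hne, map_zero] at hm'
      simp at hm'
    · obtain ⟨m₀, hm₀⟩ := Finset.nonempty_iff_ne_empty.mpr hne
      have hle : degw L ≤ μ := by
        rw [← hih m₀ hm₀]; exact le_self_add
      have hinner : ∀ m'' ∈ (itF wgt L f).support, degw m'' = μ - degw L := by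
        intro m'' hm''
        have := hih m'' hm''
        rw [← this, add_comm]
        exact (eq_tsub_of_add_eq rfl)
      have := remF_support wgt i _ hinner m' hm'
      show Finsupp.single i 1 + degw L + degw m' = μ
      rw [add_assoc, add_comm (degw L), ← add_assoc, this, tsub_add_cancel_of_le hle]


/-! ## γ weights -/

lemma qc_sub (i : I) {b b' : I →₀ ℕ} (h : b' ≤ b) :
    qc C i (b - b') = qc C i b * (qc C i b')⁻¹ := by
  rw [eq_mul_inv_iff_mul_eq₀ (qc_ne C i b'), ← qc_add, tsub_add_cancel_of_le h]

def γA (C : I → I → ℤ) (B : A →ₗ[QVT] A →ₗ[QVT] QVT) (θ : I → A) :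
    (I →₀ ℕ) → List I → QVT
  | _, [] => 1
  | a, i :: m => t ^ (2 * pairF (Dmat C) a (Finsupp.single i 1)) * B (θ i) (θ i)
      * γA C B θ (a + Finsupp.single i 1) m

@[simp] lemma γA_nil (B : A →ₗ[QVT] A →ₗ[QVT] QVT) (θ : I → A) (a : I →₀ ℕ) :
    γA C B θ a [] = 1 := rfl

lemma γA_cons (B : A →ₗ[QVT] A →ₗ[QVT] QVT) (θ : I → A) (a : I →₀ ℕ) (i : I) (m : List I) :
    γA C B θ a (i :: m) = t ^ (2 * pairF (Dmat C) a (Finsupp.single i 1)) * B (θ i) (θ i)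
      * γA C B θ (a + Finsupp.single i 1) m := rfl

lemma γA_shift (B : A →ₗ[QVT] A →ₗ[QVT] QVT) (θ : I → A) :
    ∀ (m : List I) (a b : I →₀ ℕ),
      γA C B θ (a + b) m = t ^ (2 * pairF (Dmat C) b (degw m)) * γA C B θ a m := by
  intro m
  induction m with
  | nil =>
    intro a b
    simp [γA, degw, pairF_zero_right]
  | cons i m ih =>
    intro a b
    rw [γA_cons, γA_cons, show a + b + Finsupp.single i 1 = (a + Finsupp.single i 1) + b from
      by abel, ih (a + Finsupp.single i 1) b]
    rw [show (2 * pairF (Dmat C) (a + b) (Finsupp.single i 1))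
        = 2 * pairF (Dmat C) a (Finsupp.single i 1)
          + 2 * pairF (Dmat C) b (Finsupp.single i 1) from by rw [pairF_add_left]; ring]
    rw [show (2 * pairF (Dmat C) b (degw (i :: m)))
        = 2 * pairF (Dmat C) b (Finsupp.single i 1) + 2 * pairF (Dmat C) b (degw m) from by
      rw [show degw (i :: m) = Finsupp.single i 1 + degw m from rfl, pairF_add_right]; ring]
    rw [t_split, t_split]
    ring

lemma γA_append (B : A →ₗ[QVT] A →ₗ[QVT] QVT) (θ : I → A) :
    ∀ (m : List I) (a : I →₀ ℕ) (i : I),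
      γA C B θ a (m ++ [i]) = γA C B θ a m
        * (t ^ (2 * pairF (Dmat C) (a + degw m) (Finsupp.single i 1)) * B (θ i) (θ i)) := by
  intro m
  induction m with
  | nil =>
    intro a i
    simp only [List.nil_append, γA_cons, γA_nil]
    rw [mul_one, one_mul, show degw ([] : List I) = 0 from rfl, add_zero]
  | cons k m ih =>
    intro a i
    rw [show (k :: m) ++ [i] = k :: (m ++ [i]) from rfl, γA_cons, ih, γA_cons]
    rw [show a + Finsupp.single k 1 + degw m = a + degw (k :: m) from by
      rw [show degw (k :: m) = Finsupp.single k 1 + degw m from rfl]; abel]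
    ring

/-! ## Linear combination machinery -/

lemma linearCombination_comp_cons {N : Type*} [AddCommMonoid N] [Module QVT N]
    (g : List I → N) (k : I) (f : List I →₀ QVT) :
    Finsupp.linearCombination QVT g (consF k f)
      = Finsupp.linearCombination QVT (fun m => g (k :: m)) f := by
  rw [consF, Finsupp.lmapDomain_apply, Finsupp.linearCombination_mapDomain]
  rfl

def ΘF (θ : I → A) : (List I →₀ QVT) →ₗ[QVT] A :=
  Finsupp.linearCombination QVT (Θw θ)

@[simp] lemma ΘF_single (θ : I → A) (m : List I) (c : QVT) :
    ΘF θ (Finsupp.single m c) = c • Θw θ m :=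
  Finsupp.linearCombination_single _ _ _

lemma ΘF_cons (θ : I → A) (k : I) (g : List I →₀ QVT) :
    ΘF θ (consF k g) = θ k * ΘF θ g := by
  rw [ΘF, linearCombination_comp_cons]
  show Finsupp.linearCombination QVT (⇑(LinearMap.mulLeft QVT (θ k)) ∘ Θw θ) g = _
  rw [← Finsupp.apply_linearCombination]
  rfl

def opR (ri : I → (A →ₗ[QVT] A)) (z : A) : (List I →₀ QVT) →ₗ[QVT] A :=
  Finsupp.linearCombination QVT (fun m => Rw ri m z)

@[simp] lemma opR_single (ri : I → (A →ₗ[QVT] A)) (z : A) (m : List I) (c : QVT) :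
    opR ri z (Finsupp.single m c) = c • Rw ri m z :=
  Finsupp.linearCombination_single _ _ _

lemma opR_cons (ri : I → (A →ₗ[QVT] A)) (z : A) (k : I) (g : List I →₀ QVT) :
    opR ri z (consF k g) = ri k (opR ri z g) := by
  rw [opR, linearCombination_comp_cons]
  show Finsupp.linearCombination QVT (⇑(ri k) ∘ fun m => Rw ri m z) g = _
  rw [← Finsupp.apply_linearCombination]

def ΓL (C : I → I → ℤ) (B : A →ₗ[QVT] A →ₗ[QVT] QVT) (θ : I → A) (a : I →₀ ℕ) :
    (List I →₀ QVT) →ₗ[QVT] (List I →₀ QVT) :=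
  Finsupp.linearCombination QVT (fun m => γA C B θ a m • Finsupp.single m (1 : QVT))

lemma ΓL_single (B : A →ₗ[QVT] A →ₗ[QVT] QVT) (θ : I → A) (a : I →₀ ℕ)
    (m : List I) (c : QVT) :
    ΓL C B θ a (Finsupp.single m c) = (c * γA C B θ a m) • Finsupp.single m (1 : QVT) := by
  rw [ΓL, Finsupp.linearCombination_single, smul_smul]

lemma ΓL_cons (B : A →ₗ[QVT] A →ₗ[QVT] QVT) (θ : I → A) (a : I →₀ ℕ) (k : I) :
    ∀ g : List I →₀ QVT,
      ΓL C B θ a (consF k g)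
        = (t ^ (2 * pairF (Dmat C) a (Finsupp.single k 1)) * B (θ k) (θ k))
            • consF k (ΓL C B θ (a + Finsupp.single k 1) g) := by
  suffices h : (ΓL C B θ a).comp (consF k)
      = (t ^ (2 * pairF (Dmat C) a (Finsupp.single k 1)) * B (θ k) (θ k))
          • ((consF k).comp (ΓL C B θ (a + Finsupp.single k 1))) by
    intro g
    exact DFunLike.congr_fun h g
  apply Finsupp.lhom_ext
  intro m c
  simp only [LinearMap.comp_apply, LinearMap.smul_apply, consF_single, ΓL_single,
    map_smul, smul_smul]
  congr 1
  rw [γA_cons]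
  ring

def opG (C : I → I → ℤ) (B : A →ₗ[QVT] A →ₗ[QVT] QVT) (θ : I → A)
    (ri : I → (A →ₗ[QVT] A)) (z : A) : (List I →₀ QVT) →ₗ[QVT] A :=
  Finsupp.linearCombination QVT (fun m => γA C B θ 0 m • Rw ri m z)

@[simp] lemma opG_single (B : A →ₗ[QVT] A →ₗ[QVT] QVT) (θ : I → A)
    (ri : I → (A →ₗ[QVT] A)) (z : A) (m : List I) (c : QVT) :
    opG C B θ ri z (Finsupp.single m c) = (c * γA C B θ 0 m) • Rw ri m z := by
  rw [opG, Finsupp.linearCombination_single, smul_smul]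

lemma opG_eq (B : A →ₗ[QVT] A →ₗ[QVT] QVT) (θ : I → A)
    (ri : I → (A →ₗ[QVT] A)) (z : A) (f : List I →₀ QVT) :
    opG C B θ ri z f = opR ri z (ΓL C B θ 0 f) := by
  suffices h : opG C B θ ri z = (opR ri z).comp (ΓL C B θ 0) from DFunLike.congr_fun h f
  apply Finsupp.lhom_ext
  intro m c
  simp only [LinearMap.comp_apply, opG_single, ΓL_single, map_smul, opR_single, one_smul,
    smul_smul, mul_one]

/-! ## Interaction of r with words -/

section Aside

variable (𝒜 : (I →₀ ℕ) → Submodule QVT A) (θ : I → A) (ri : I → (A →ₗ[QVT] A))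
variable (B : A →ₗ[QVT] A →ₗ[QVT] QVT)

lemma rid1 [GradedAlgebra 𝒜]
    (hθ : ∀ i, θ i ∈ 𝒜 (Finsupp.single i 1))
    (hriθ : ∀ i j, ri i (θ j) = if i = j then 1 else 0)
    (hrimul : ∀ (i : I) (x y : A) (a b : I →₀ ℕ), x ∈ 𝒜 a → y ∈ 𝒜 b →
      ri i (x * y)
        = (v ^ (-(dotF C (Finsupp.single i 1) b))
            * t ^ (pairF C b (Finsupp.single i 1) - pairF C (Finsupp.single i 1) b))
              • (ri i x * y) + x * ri i y)
    (i j : I) {b : I →₀ ℕ} {u : A} (hu : u ∈ 𝒜 b) :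
    ri i (θ j * u) = (if i = j then qc C i b else 0) • u + θ j * ri i u := by
  rw [hrimul i (θ j) u (Finsupp.single j 1) b (hθ j) hu, hriθ]
  by_cases hij : i = j
  · rw [if_pos hij, if_pos hij, one_mul]
    rfl
  · rw [if_neg hij, if_neg hij, zero_mul, smul_zero, zero_smul]

variable [GradedAlgebra 𝒜]
    (hθ : ∀ i, θ i ∈ 𝒜 (Finsupp.single i 1))
    (hri1 : ∀ i, ri i 1 = 0)
    (hriθ : ∀ i j, ri i (θ j) = if i = j then 1 else 0)
    (hrimul : ∀ (i : I) (x y : A) (a b : I →₀ ℕ), x ∈ 𝒜 a → y ∈ 𝒜 b →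
      ri i (x * y)
        = (v ^ (-(dotF C (Finsupp.single i 1) b))
            * t ^ (pairF C b (Finsupp.single i 1) - pairF C (Finsupp.single i 1) b))
              • (ri i x * y) + x * ri i y)

include 𝒜 hθ hri1 hriθ hrimul in
lemma riΘw : ∀ (m : List I) (i : I),
    ri i (Θw θ m) = ΘF θ (remW (qc C) i m) := by
  intro m
  induction m with
  | nil =>
    intro i
    rw [show Θw θ [] = (1 : A) from rfl, hri1 i, show remW (qc C) i [] = 0 from rfl, map_zero]
  | cons k u ih =>
    intro i
    rw [show Θw θ (k :: u) = θ k * Θw θ u from rfl,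
      rid1 C 𝒜 θ ri hθ hriθ hrimul i k (Θw_mem 𝒜 θ hθ u), ih i,
      show remW (qc C) i (k :: u)
        = (if i = k then qc C i (degw u) • Finsupp.single u (1 : QVT) else 0)
          + consF k (remW (qc C) i u) from rfl,
      map_add, ΘF_cons]
    congr 1
    by_cases hik : i = k
    · rw [if_pos hik, if_pos hik, map_smul, ΘF_single, one_smul]
    · rw [if_neg hik, if_neg hik, map_zero, zero_smul]

include 𝒜 hθ hri1 hriθ hrimul in
lemma riΘF (i : I) (f : List I →₀ QVT) :
    ri i (ΘF θ f) = ΘF θ (remF (qc C) i f) := by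
  have h := eq_on_singles ((ri i).comp (ΘF θ)) ((ΘF θ).comp (remF (qc C) i)) f ?_
  · exact h
  · intro m _ c
    simp only [LinearMap.comp_apply, ΘF_single, map_smul, remF_single]
    rw [riΘw C 𝒜 θ ri hθ hri1 hriθ hrimul m i]

include 𝒜 hθ hri1 hriθ hrimul in
lemma Rw_ΘF : ∀ (m : List I) (f : List I →₀ QVT),
    Rw ri m (ΘF θ f) = ΘF θ (itF (qc C) m f) := by
  intro m
  induction m with
  | nil => intro f; rfl
  | cons i m ih =>
    intro f
    rw [Rw_cons, ih f, itF_cons, riΘF C 𝒜 θ ri hθ hri1 hriθ hrimul]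

include hθ in
lemma ΘF_mem {b : I →₀ ℕ} (f : List I →₀ QVT)
    (hf : ∀ m ∈ f.support, degw m = b) : ΘF θ f ∈ 𝒜 b := by
  rw [ΘF, Finsupp.linearCombination_apply, Finsupp.sum]
  apply Submodule.sum_mem
  intro m hm
  apply Submodule.smul_mem
  have := Θw_mem 𝒜 θ hθ m
  rwa [hf m hm] at this

lemma itF_single_support (m w : List I) :
    ∀ m' ∈ (itF (qc C) m (Finsupp.single w (1 : QVT))).support,
      degw m + degw m' = degw w := by
  apply itF_support
  intro m' hm'
  have h := Finsupp.support_single_subset hm'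
  rw [Finset.mem_singleton] at h
  subst h
  rfl

lemma Θw_eq_ΘF_single (w : List I) : Θw θ w = ΘF θ (Finsupp.single w (1 : QVT)) := by
  rw [ΘF_single, one_smul]

include 𝒜 hθ hri1 hriθ hrimul in
lemma Rw_Θw_zero (m w : List I) (hnle : ¬ degw m ≤ degw w) :
    Rw ri m (Θw θ w) = 0 := by
  rw [Θw_eq_ΘF_single θ, Rw_ΘF C 𝒜 θ ri hθ hri1 hriθ hrimul]
  have hempty : (itF (qc C) m (Finsupp.single w (1 : QVT))).support = ∅ := by
    by_contra hne
    obtain ⟨m₀, hm₀⟩ := Finset.nonempty_iff_ne_empty.mpr hne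
    exact hnle (by rw [← itF_single_support C m w m₀ hm₀]; exact le_self_add)
  rw [Finsupp.support_eq_empty.mp hempty, map_zero]

include 𝒜 hθ hri1 hriθ hrimul in
lemma Rw_Θw_mem (m w : List I) (hle : degw m ≤ degw w) :
    Rw ri m (Θw θ w) ∈ 𝒜 (degw w - degw m) := by
  rw [Θw_eq_ΘF_single θ, Rw_ΘF C 𝒜 θ ri hθ hri1 hriθ hrimul]
  apply ΘF_mem 𝒜 θ hθ
  intro m' hm'
  have := itF_single_support C m w m' hm'
  rw [← this, add_comm]
  exact eq_tsub_of_add_eq rfl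

/-! ## Peeling the first slot of B -/

include hθ in
lemma B_Θw (hadj : ∀ (i : I) (y x : A) (b : I →₀ ℕ), y ∈ 𝒜 b →
      B (y * θ i) x
        = t ^ (2 * pairF (Dmat C) b (Finsupp.single i 1))
            * B y (ri i x) * B (θ i) (θ i)) :
    ∀ (m : List I) (z : A), B (Θw θ m) z = γA C B θ 0 m * B 1 (Rw ri m z) := by
  intro m
  induction m using List.reverseRecOn with
  | nil => intro z; rw [show Θw θ [] = (1:A) from rfl, γA_nil, Rw_nil, one_mul]
  | append_singleton m i ih =>
    intro z
    rw [Θw_append, show Θw θ [i] = θ i * 1 from rfl, mul_one,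
      hadj i (Θw θ m) z (degw m) (Θw_mem 𝒜 θ hθ m), ih (ri i z),
      γA_append, Rw_append_single, zero_add]
    ring

/-! ## The key commutation with left multiplication by θ j (CLm) -/

include 𝒜 hθ hri1 hriθ hrimul in
lemma CLm (j : I) (w : List I) : ∀ (m : List I),
    Rw ri m (θ j * Θw θ w) = θ j * Rw ri m (Θw θ w)
      + qc C j (degw w) • opR ri (Θw θ w) (remW (fun i b => (qc C i b)⁻¹) j m) := by
  intro m
  induction m with
  | nil =>
    rw [show remW (fun i b => (qc C i b)⁻¹) j [] = 0 from rfl, map_zero, smul_zero, add_zero]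
    rfl
  | cons i m' ih =>
    have hopR : opR ri (Θw θ w) (remW (fun i b => (qc C i b)⁻¹) j (i :: m'))
        = (if j = i then (qc C j (degw m'))⁻¹ • Rw ri m' (Θw θ w) else 0)
          + ri i (opR ri (Θw θ w) (remW (fun i b => (qc C i b)⁻¹) j m')) := by
      rw [show remW (fun i b => (qc C i b)⁻¹) j (i :: m')
          = (if j = i then (qc C j (degw m'))⁻¹ • Finsupp.single m' (1 : QVT) else 0)
            + consF i (remW (fun i b => (qc C i b)⁻¹) j m') from rfl,
        map_add, opR_cons]
      congr 1
      by_cases hji : j = i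
      · rw [if_pos hji, if_pos hji, map_smul, opR_single, one_smul]
      · rw [if_neg hji, if_neg hji, map_zero]
    rw [Rw_cons, ih, map_add, map_smul, hopR]
    by_cases hle : degw m' ≤ degw w
    · rw [rid1 C 𝒜 θ ri hθ hriθ hrimul i j (Rw_Θw_mem C 𝒜 θ ri hθ hri1 hriθ hrimul m' w hle)]
      have key : (if i = j then qc C i (degw w - degw m') else 0) • Rw ri m' (Θw θ w)
          = qc C j (degw w) •
              (if j = i then (qc C j (degw m'))⁻¹ • Rw ri m' (Θw θ w) else 0) := by
        by_cases hij : i = j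
        · subst hij
          rw [if_pos rfl, if_pos rfl, smul_smul, qc_sub C i hle]
        · rw [if_neg hij, if_neg (Ne.symm hij), zero_smul, smul_zero]
      rw [smul_add, key, Rw_cons]
      abel
    · have hz : Rw ri m' (Θw θ w) = 0 :=
        Rw_Θw_zero C 𝒜 θ ri hθ hri1 hriθ hrimul m' w hle
      rw [hz, mul_zero, map_zero, zero_add, Rw_cons, hz, map_zero, mul_zero, zero_add,
        smul_add]
      congr 1
      split <;> simp

/-! ## The SCAL identity -/

set_option maxHeartbeats 1000000 in
include hθ in
lemma SCAL (j : I) : ∀ (m : List I) (a : I →₀ ℕ),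
    γA C B θ a m • remW (fun i b => (qc C i b)⁻¹) j m
      = (B (θ j) (θ j)
          * t ^ (2 * pairF (Dmat C) ((a + degw m) - Finsupp.single j 1) (Finsupp.single j 1)))
          • ΓL C B θ a (remW (qb C) j m) := by
  intro m
  induction m with
  | nil =>
    intro a
    rw [show remW (fun i b => (qc C i b)⁻¹) j [] = 0 from rfl,
      show remW (qb C) j [] = 0 from rfl, smul_zero, map_zero, smul_zero]
  | cons k u ih =>
    intro a
    rw [show remW (fun i b => (qc C i b)⁻¹) j (k :: u)
        = (if j = k then (qc C j (degw u))⁻¹ • Finsupp.single u (1 : QVT) else 0)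
          + consF k (remW (fun i b => (qc C i b)⁻¹) j u) from rfl,
      show remW (qb C) j (k :: u)
        = (if j = k then qb C j (degw u) • Finsupp.single u (1 : QVT) else 0)
          + consF k (remW (qb C) j u) from rfl,
      smul_add, map_add, smul_add]
    congr 1
    · -- head terms
      by_cases hjk : j = k
      · subst hjk
        rw [if_pos rfl, if_pos rfl, map_smul, ΓL_single, one_mul, smul_smul, smul_smul,
          smul_smul]
        congr 1
        have hcancel : (a + degw (j :: u)) - Finsupp.single j 1 = a + degw u := by
          rw [show degw (j :: u) = Finsupp.single j 1 + degw u from rfl,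
            show a + (Finsupp.single j 1 + degw u)
              = (a + degw u) + Finsupp.single j 1 from by abel]
          exact add_tsub_cancel_right _ _
        rw [hcancel, γA_cons, γA_shift C B θ u a (Finsupp.single j 1)]
        have hscal : t ^ (2 * pairF (Dmat C) a (Finsupp.single j 1))
              * t ^ (2 * pairF (Dmat C) (Finsupp.single j 1) (degw u))
            = t ^ (2 * pairF (Dmat C) (a + degw u) (Finsupp.single j 1))
              * (qb C j (degw u) * qc C j (degw u)) := by
          rw [qb_mul_qc, ← t_split, ← t_split]
          congr 1
          rw [pairF_add_left]
          have hkey := key_exch C j (degw u)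
          linarith
        have hq := qc_ne C j (degw u)
        rw [mul_inv_eq_iff_eq_mul₀ hq]
        linear_combination (B (θ j) (θ j) * γA C B θ a u) * hscal
      · rw [if_neg hjk, if_neg hjk, smul_zero, map_zero, smul_zero]
    · -- tail terms
      have hstep : a + degw (k :: u) = (a + Finsupp.single k 1) + degw u := by
        rw [show degw (k :: u) = Finsupp.single k 1 + degw u from rfl]; abel
      calc γA C B θ a (k :: u) • consF k (remW (fun i b => (qc C i b)⁻¹) j u)
          = (t ^ (2 * pairF (Dmat C) a (Finsupp.single k 1)) * B (θ k) (θ k))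
              • consF k (γA C B θ (a + Finsupp.single k 1) u
                  • remW (fun i b => (qc C i b)⁻¹) j u) := by
            rw [γA_cons, map_smul, smul_smul, mul_assoc]
        _ = (t ^ (2 * pairF (Dmat C) a (Finsupp.single k 1)) * B (θ k) (θ k))
              • consF k ((B (θ j) (θ j)
                  * t ^ (2 * pairF (Dmat C)
                      ((a + degw (k :: u)) - Finsupp.single j 1) (Finsupp.single j 1)))
                  • ΓL C B θ (a + Finsupp.single k 1) (remW (qb C) j u)) := by
            rw [ih (a + Finsupp.single k 1), hstep]
        _ = (B (θ j) (θ j)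
              * t ^ (2 * pairF (Dmat C)
                  ((a + degw (k :: u)) - Finsupp.single j 1) (Finsupp.single j 1)))
              • ((t ^ (2 * pairF (Dmat C) a (Finsupp.single k 1)) * B (θ k) (θ k))
                • consF k (ΓL C B θ (a + Finsupp.single k 1) (remW (qb C) j u))) := by
            rw [map_smul, smul_smul, smul_smul, mul_comm]
        _ = _ := by rw [ΓL_cons]

/-! ## The aggregated identity CL -/

include 𝒜 hθ hri1 hriθ hrimul in
lemma CL (f : List I →₀ QVT) {μ : I →₀ ℕ} (hf : ∀ m ∈ f.support, degw m = μ)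
    (j : I) (w : List I) :
    opG C B θ ri (θ j * Θw θ w) f
      = θ j * opG C B θ ri (Θw θ w) f
        + (qc C j (degw w) * B (θ j) (θ j)
            * t ^ (2 * pairF (Dmat C) (μ - Finsupp.single j 1) (Finsupp.single j 1)))
          • opG C B θ ri (Θw θ w) (remF (qb C) j f) := by
  have h := eq_on_singles (opG C B θ ri (θ j * Θw θ w))
    ((LinearMap.mulLeft QVT (θ j)).comp (opG C B θ ri (Θw θ w))
      + (qc C j (degw w) * B (θ j) (θ j)
          * t ^ (2 * pairF (Dmat C) (μ - Finsupp.single j 1) (Finsupp.single j 1)))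
        • ((opG C B θ ri (Θw θ w)).comp (remF (qb C) j))) f ?_
  · rw [h]
    simp only [LinearMap.add_apply, LinearMap.comp_apply, LinearMap.smul_apply,
      LinearMap.mulLeft_apply]
  · intro m hm c
    have hdm : degw m = μ := hf m hm
    rw [opG_single, CLm C 𝒜 θ ri hθ hri1 hriθ hrimul j w m, smul_add]
    simp only [LinearMap.add_apply, LinearMap.comp_apply, LinearMap.smul_apply,
      LinearMap.mulLeft_apply, opG_single, remF_single, map_smul]
    congr 1
    have hS := SCAL C 𝒜 θ B hθ j m 0
    rw [zero_add, hdm] at hS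
    have h2 := congrArg (opR ri (Θw θ w)) hS
    rw [map_smul, map_smul] at h2
    conv_lhs => rw [smul_smul, show (c * γA C B θ 0 m) * qc C j (degw w)
        = (c * qc C j (degw w)) * γA C B θ 0 m from by ring, mul_smul, h2, smul_smul]
    conv_rhs => rw [smul_smul, opG_eq C B θ ri]
    congr 1
    ring

/-! ## Main vanishing lemma for opG -/

include 𝒜 hθ hri1 hriθ hrimul in
lemma vanishing_op : ∀ (w : List I) (μ : I →₀ ℕ) (f : List I →₀ QVT),
    (∀ m ∈ f.support, degw m = μ) →
    (∀ L : List I, degw L = μ → (itF (qb C) L f) [] = 0) →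
    opG C B θ ri (Θw θ w) f = 0 := by
  intro w
  induction w with
  | nil =>
    intro μ f hf hvan
    rw [opG, Finsupp.linearCombination_apply, Finsupp.sum]
    apply Finset.sum_eq_zero
    intro m hm
    cases m with
    | nil =>
      exfalso
      have hμ : μ = 0 := by rw [← hf [] hm]; rfl
      have h0 : f [] = 0 := hvan [] (by rw [hμ]; rfl)
      exact Finsupp.mem_support_iff.mp hm h0
    | cons i m'' =>
      rw [show Θw θ [] = (1 : A) from rfl, Rw_one ri hri1 i m'', smul_zero, smul_zero]
  | cons j w' ih =>
    intro μ f hf hvan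
    rw [show Θw θ (j :: w') = θ j * Θw θ w' from rfl,
      CL C 𝒜 θ ri B hθ hri1 hriθ hrimul f hf j w', ih μ f hf hvan, mul_zero, zero_add]
    suffices hz : opG C B θ ri (Θw θ w') (remF (qb C) j f) = 0 by rw [hz, smul_zero]
    apply ih (μ - Finsupp.single j 1) (remF (qb C) j f)
    · intro m' hm'
      have := remF_support (qb C) j f hf m' hm'
      rw [← this, add_comm]
      exact eq_tsub_of_add_eq rfl
    · intro L hL
      rw [← itF_append_single]
      by_cases hjle : Finsupp.single j 1 ≤ μ
      · apply hvan
        rw [degw_append, hL, show degw [j] = Finsupp.single j 1 from by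
          rw [show degw [j] = Finsupp.single j 1 + degw ([] : List I) from rfl]; simp [degw],
          tsub_add_cancel_of_le hjle]
      · have hzero : remF (qb C) j f = 0 := by
          rw [← Finsupp.support_eq_empty]
          by_contra hne
          obtain ⟨m', hm'⟩ := Finset.nonempty_iff_ne_empty.mpr hne
          exact hjle (by rw [← remF_support (qb C) j f hf m' hm']; exact le_self_add)
        rw [itF_append_single, hzero, itF_zero]
        rfl

end Aside

/-! ## Commutation of the two formal derivation families -/

lemma remF_consF (wgt : I → (I →₀ ℕ) → QVT) (i k : I) {d : I →₀ ℕ} (g : List I →₀ QVT)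
    (hg : ∀ m' ∈ g.support, degw m' = d) :
    remF wgt i (consF k g)
      = (if i = k then wgt i d • g else 0) + consF k (remF wgt i g) := by
  have h := eq_on_singles ((remF wgt i).comp (consF k))
    ((if i = k then wgt i d
        • (LinearMap.id : (List I →₀ QVT) →ₗ[QVT] (List I →₀ QVT)) else 0)
      + (consF k).comp (remF wgt i)) g ?_
  · rw [LinearMap.comp_apply] at h
    rw [h, LinearMap.add_apply, LinearMap.comp_apply]
    congr 1
    by_cases hik : i = k
    · rw [if_pos hik, if_pos hik, LinearMap.smul_apply, LinearMap.id_apply]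
    · rw [if_neg hik, if_neg hik, LinearMap.zero_apply]
  · intro m hm c
    simp only [LinearMap.comp_apply, LinearMap.add_apply, LinearMap.smul_apply,
      LinearMap.zero_apply, LinearMap.id_apply, consF_single, remF_single]
    rw [show remW wgt i (k :: m)
        = (if i = k then wgt i (degw m) • Finsupp.single m (1 : QVT) else 0)
          + consF k (remW wgt i m) from rfl, smul_add, hg m hm, map_smul]
    congr 1
    by_cases hik : i = k
    · rw [if_pos hik, apply_ite (fun (L : (List I →₀ QVT) →ₗ[QVT] (List I →₀ QVT)) =>
        L (Finsupp.single m c)), if_pos hik, LinearMap.smul_apply, LinearMap.id_apply,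
        Finsupp.smul_single, Finsupp.smul_single, smul_eq_mul, smul_eq_mul, mul_one,
        mul_comm]
      rw [Finsupp.smul_single, smul_eq_mul]
    · rw [if_neg hik, apply_ite (fun (L : (List I →₀ QVT) →ₗ[QVT] (List I →₀ QVT)) =>
        L (Finsupp.single m c)), if_neg hik, LinearMap.zero_apply, smul_zero]

lemma qb_inv_eq (i j : I) : (qc C i (Finsupp.single j 1))⁻¹ = qb C j (Finsupp.single i 1) :=
  inv_eq_of_mul_eq_one_left (qb_qc_inv C i j)

set_option maxHeartbeats 2000000 in
lemma comm_word : ∀ (m : List I) (i j : I),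
    remF (qc C) i (remW (qb C) j m)
      = qb C j (Finsupp.single i 1) • remF (qb C) j (remW (qc C) i m) := by
  intro m
  induction m with
  | nil =>
    intro i j
    rw [show remW (qb C) j [] = 0 from rfl, show remW (qc C) i [] = 0 from rfl,
      map_zero, map_zero, smul_zero]
  | cons k u ih =>
    intro i j
    have hsupb : ∀ m' ∈ (remW (qb C) j u).support,
        degw m' = degw u - Finsupp.single j 1 := by
      intro m' hm'
      have h := remW_support (qb C) j u m' hm'
      rw [← h, add_comm]
      exact eq_tsub_of_add_eq rfl
    have hsupc : ∀ m' ∈ (remW (qc C) i u).support,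
        degw m' = degw u - Finsupp.single i 1 := by
      intro m' hm'
      have h := remW_support (qc C) i u m' hm'
      rw [← h, add_comm]
      exact eq_tsub_of_add_eq rfl
    rw [show remW (qb C) j (k :: u)
        = (if j = k then qb C j (degw u) • Finsupp.single u (1 : QVT) else 0)
          + consF k (remW (qb C) j u) from rfl,
      show remW (qc C) i (k :: u)
        = (if i = k then qc C i (degw u) • Finsupp.single u (1 : QVT) else 0)
          + consF k (remW (qc C) i u) from rfl,
      map_add, map_add, remF_consF (qc C) i k (remW (qb C) j u) hsupb,
      remF_consF (qb C) j k (remW (qc C) i u) hsupc]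
    have hhead1 : remF (qc C) i
        (if j = k then qb C j (degw u) • Finsupp.single u (1 : QVT) else 0)
        = (if j = k then qb C j (degw u) • remW (qc C) i u else 0) := by
      by_cases hjk : j = k
      · rw [if_pos hjk, if_pos hjk, map_smul, remF_single, one_smul]
      · rw [if_neg hjk, if_neg hjk, map_zero]
    have hhead2 : remF (qb C) j
        (if i = k then qc C i (degw u) • Finsupp.single u (1 : QVT) else 0)
        = (if i = k then qc C i (degw u) • remW (qb C) j u else 0) := by
      by_cases hik : i = k
      · rw [if_pos hik, if_pos hik, map_smul, remF_single, one_smul]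
      · rw [if_neg hik, if_neg hik, map_zero]
    rw [hhead1, hhead2]
    have hX : (if j = k then qb C j (degw u) • remW (qc C) i u else 0)
        = qb C j (Finsupp.single i 1)
          • (if j = k then qb C j (degw u - Finsupp.single i 1) • remW (qc C) i u else 0) := by
      by_cases hjk : j = k
      · rw [if_pos hjk, if_pos hjk, smul_smul]
        by_cases hile : Finsupp.single i 1 ≤ degw u
        · congr 1
          rw [← qb_add, add_comm, tsub_add_cancel_of_le hile]
        · rw [remW_vanish (qc C) i u (by
            by_contra hne
            exact hile (Finsupp.single_le_iff.mpr (Nat.one_le_iff_ne_zero.mpr hne))),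
            smul_zero, smul_zero]
      · rw [if_neg hjk, if_neg hjk, smul_zero]
    have hY : (if i = k then qc C i (degw u - Finsupp.single j 1) • remW (qb C) j u else 0)
        = qb C j (Finsupp.single i 1)
          • (if i = k then qc C i (degw u) • remW (qb C) j u else 0) := by
      by_cases hik : i = k
      · rw [if_pos hik, if_pos hik, smul_smul]
        by_cases hjle : Finsupp.single j 1 ≤ degw u
        · congr 1
          rw [qc_sub C i hjle, qb_inv_eq C i j, mul_comm]
        · rw [remW_vanish (qb C) j u (by
            by_contra hne
            exact hjle (Finsupp.single_le_iff.mpr (Nat.one_le_iff_ne_zero.mpr hne))),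
            smul_zero, smul_zero]
      · rw [if_neg hik, if_neg hik, smul_zero]
    have hN : consF k (remF (qc C) i (remW (qb C) j u))
        = qb C j (Finsupp.single i 1) • consF k (remF (qb C) j (remW (qc C) i u)) := by
      rw [ih i j, map_smul]
    rw [hX, hY, hN, smul_add, smul_add]
    exact add_left_comm _ _ _

lemma comm_F (i j : I) (f : List I →₀ QVT) :
    remF (qc C) i (remF (qb C) j f)
      = qb C j (Finsupp.single i 1) • remF (qb C) j (remF (qc C) i f) := by
  have h := eq_on_singles ((remF (qc C) i).comp (remF (qb C) j))
    (qb C j (Finsupp.single i 1) • ((remF (qb C) j).comp (remF (qc C) i))) f ?_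
  · rw [LinearMap.comp_apply] at h
    rw [h, LinearMap.smul_apply, LinearMap.comp_apply]
  · intro m _ c
    simp only [LinearMap.comp_apply, LinearMap.smul_apply, remF_single, map_smul]
    rw [comm_word C m i j, smul_smul, smul_smul, mul_comm]

lemma comm_iter (i : I) : ∀ (L : List I) (f : List I →₀ QVT),
    remF (qc C) i (itF (qb C) L f)
      = (L.map fun k => qb C k (Finsupp.single i 1)).prod • itF (qb C) L (remF (qc C) i f) := by
  intro L
  induction L with
  | nil => intro f; simp
  | cons j L ih =>
    intro f
    rw [itF_cons, comm_F C i j, ih f, map_smul, itF_cons, smul_smul, List.map_cons,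
      List.prod_cons]

lemma rbF_eq_rF_on_single_deg (j : I) (g : List I →₀ QVT)
    (hg : ∀ m' ∈ g.support, degw m' = Finsupp.single j 1) :
    remF (qb C) j g = remF (qc C) j g := by
  apply eq_on_singles (remF (qb C) j) (remF (qc C) j) g
  intro m hm c
  have hmj : m = [j] := degw_eq_single (hg m hm)
  subst hmj
  rw [remF_single, remF_single]
  congr 1
  rw [show remW (qb C) j [j]
      = (if j = j then qb C j (degw ([] : List I)) • Finsupp.single ([] : List I) (1 : QVT)
          else 0) + consF j (remW (qb C) j []) from rfl,
    show remW (qc C) j [j]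
      = (if j = j then qc C j (degw ([] : List I)) • Finsupp.single ([] : List I) (1 : QVT)
          else 0) + consF j (remW (qc C) j []) from rfl,
    if_pos rfl, if_pos rfl, show degw ([] : List I) = 0 from rfl, qb_zero, qc_zero,
    show remW (qb C) j [] = 0 from rfl, show remW (qc C) j [] = 0 from rfl]

lemma barIter_vanish : ∀ (L : List I) (f : List I →₀ QVT),
    (∀ m ∈ f.support, degw m = degw L) →
    (∀ L' : List I, degw L' = degw L → (itF (qc C) L' f) [] = 0) →
    (itF (qb C) L f) [] = 0 := by
  intro L
  induction L with
  | nil =>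
    intro f _ h2
    exact h2 [] rfl
  | cons j L' ih =>
    intro f hf h2
    have hsupg : ∀ m' ∈ (itF (qb C) L' f).support, degw m' = Finsupp.single j 1 := by
      intro m' hm'
      have h := itF_support (qb C) L' f (by
        intro m hm
        rw [hf m hm, show degw (j :: L') = Finsupp.single j 1 + degw L' from rfl]) m' hm'
      apply add_left_cancel (a := degw L')
      rw [h, add_comm]
    rw [itF_cons, rbF_eq_rF_on_single_deg C j _ hsupg, comm_iter C j L' f,
      Finsupp.smul_apply, smul_eq_mul]
    have hzero : (itF (qb C) L' (remF (qc C) j f)) [] = 0 := by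
      apply ih (remF (qc C) j f)
      · intro m' hm'
        have h := remF_support (qc C) j f (fun m hm => by
          rw [hf m hm, show degw (j :: L') = Finsupp.single j 1 + degw L' from rfl]) m' hm'
        exact add_left_cancel h
      · intro L'' hL''
        rw [← itF_append_single]
        apply h2
        rw [degw_append, hL'', show degw [j] = Finsupp.single j 1 from by
          rw [show degw [j] = Finsupp.single j 1 + degw ([] : List I) from rfl]
          simp [degw], add_comm]
        rfl
    rw [hzero, mul_zero]

/-! ## Generation and representation -/

lemma span_top (θ : I → A) (hgen : Algebra.adjoin QVT (Set.range θ) = ⊤) :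
    Submodule.span QVT (Set.range (Θw θ)) = ⊤ := by
  set p := Submodule.span QVT (Set.range (Θw θ)) with hp
  have h1 : (1 : A) ∈ p := Submodule.subset_span ⟨[], rfl⟩
  have key : ∀ x ∈ p, ∀ y ∈ p, x * y ∈ p := by
    intro x hx
    induction hx using Submodule.span_induction with
    | mem a ha =>
      intro y hy
      induction hy using Submodule.span_induction with
      | mem b hb =>
        obtain ⟨m₁, rfl⟩ := ha
        obtain ⟨m₂, rfl⟩ := hb
        exact Submodule.subset_span ⟨m₁ ++ m₂, Θw_append θ m₁ m₂⟩
      | zero => rw [mul_zero]; exact zero_mem p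
      | add b c hb hc ihb ihc => rw [mul_add]; exact add_mem ihb ihc
      | smul r b hb ihb => rw [mul_smul_comm]; exact Submodule.smul_mem p r ihb
    | zero => intro y hy; rw [zero_mul]; exact zero_mem p
    | add a b ha hb iha ihb => intro y hy; rw [add_mul]; exact add_mem (iha y hy) (ihb y hy)
    | smul r a ha iha => intro y hy; rw [smul_mul_assoc]; exact Submodule.smul_mem p r (iha y hy)
  have hle : Algebra.adjoin QVT (Set.range θ)
      ≤ p.toSubalgebra h1 (fun x y hx hy => key x hx y hy) := by
    apply Algebra.adjoin_le
    rintro _ ⟨i, rfl⟩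
    show θ i ∈ p
    exact Submodule.subset_span ⟨[i], by
      rw [show Θw θ [i] = θ i * Θw θ [] from rfl, show Θw θ [] = (1 : A) from rfl, mul_one]⟩
  rw [eq_top_iff]
  intro x _
  have hx : x ∈ Algebra.adjoin QVT (Set.range θ) := by rw [hgen]; trivial
  exact Submodule.mem_toSubalgebra.mp (hle hx)

lemma exists_rep (𝒜 : (I →₀ ℕ) → Submodule QVT A) [GradedAlgebra 𝒜] (θ : I → A)
    (hθ : ∀ i, θ i ∈ 𝒜 (Finsupp.single i 1))
    (hgen : Algebra.adjoin QVT (Set.range θ) = ⊤) (b : I →₀ ℕ) (x : A) (hx : x ∈ 𝒜 b) :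
    ∃ f : List I →₀ QVT, (∀ m ∈ f.support, degw m = b) ∧ ΘF θ f = x := by
  classical
  have hmem : x ∈ LinearMap.range (ΘF θ) := by
    rw [ΘF, Finsupp.range_linearCombination, span_top θ hgen]
    trivial
  obtain ⟨f, hf⟩ := hmem
  set πb : A →ₗ[QVT] A :=
    (𝒜 b).subtype.comp ((DFinsupp.lapply b).comp
      (DirectSum.decomposeLinearEquiv 𝒜).toLinearMap) with hπb
  have hπ_mem : ∀ (c : I →₀ ℕ) (y : A), y ∈ 𝒜 c → πb y = if c = b then y else 0 := by
    intro c y hy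
    by_cases hcb : c = b
    · subst hcb
      rw [if_pos rfl]
      show ((DirectSum.decompose 𝒜 y) c : A) = y
      exact DirectSum.decompose_of_mem_same 𝒜 hy
    · rw [if_neg hcb]
      show ((DirectSum.decompose 𝒜 y) b : A) = 0
      exact DirectSum.decompose_of_mem_ne 𝒜 hy hcb
  have hπx : πb x = x := by rw [hπ_mem b x hx, if_pos rfl]
  have hfilter : ΘF θ (f.filter fun m => degw m = b) = πb (ΘF θ f) := by
    rw [ΘF, Finsupp.linearCombination_apply, Finsupp.linearCombination_apply,
      map_finsuppSum, Finsupp.sum, Finsupp.sum, Finsupp.support_filter, Finset.sum_filter]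
    apply Finset.sum_congr rfl
    intro m hm
    by_cases hdb : degw m = b
    · rw [if_pos hdb, Finsupp.filter_apply_pos (fun m => degw m = b) f hdb, map_smul,
        hπ_mem (degw m) _ (Θw_mem 𝒜 θ hθ m), if_pos hdb]
    · rw [if_neg hdb, map_smul, hπ_mem (degw m) _ (Θw_mem 𝒜 θ hθ m), if_neg hdb, smul_zero]
  refine ⟨f.filter fun m => degw m = b, ?_, ?_⟩
  · intro m hm
    rw [Finsupp.support_filter, Finset.mem_filter] at hm
    exact hm.2
  · rw [hfilter, hf, hπx]

lemma B_eq_opG (𝒜 : (I →₀ ℕ) → Submodule QVT A) [GradedAlgebra 𝒜] (θ : I → A)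
    (ri : I → (A →ₗ[QVT] A)) (B : A →ₗ[QVT] A →ₗ[QVT] QVT)
    (hθ : ∀ i, θ i ∈ 𝒜 (Finsupp.single i 1))
    (hadj : ∀ (i : I) (y x : A) (b : I →₀ ℕ), y ∈ 𝒜 b →
      B (y * θ i) x
        = t ^ (2 * pairF (Dmat C) b (Finsupp.single i 1))
            * B y (ri i x) * B (θ i) (θ i))
    (f : List I →₀ QVT) (z : A) :
    B (ΘF θ f) z = B 1 (opG C B θ ri z f) := by
  have h1 : B (ΘF θ f) z = (B.flip z) (ΘF θ f) := rfl
  rw [h1, ΘF, Finsupp.linearCombination_apply, map_finsuppSum,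
    opG, Finsupp.linearCombination_apply, map_finsuppSum]
  apply Finsupp.sum_congr
  intro m _
  rw [map_smul, LinearMap.flip_apply, B_Θw C 𝒜 θ ri B hθ hadj m z, map_smul, map_smul,
    smul_eq_mul, smul_eq_mul, smul_eq_mul]

end Vanish10

theorem vanishing_of_all_ri {I : Type*} [Fintype I] [DecidableEq I]
    (C : I → I → ℤ)
    {A : Type*} [Ring A] [Algebra QVT A]
    (𝒜 : (I →₀ ℕ) → Submodule QVT A) [GradedAlgebra 𝒜]
    (θ : I → A) (hθ : ∀ i, θ i ∈ 𝒜 (Finsupp.single i 1))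
    (hgen : Algebra.adjoin QVT (Set.range θ) = ⊤)
    (B : A →ₗ[QVT] A →ₗ[QVT] QVT)
    (hnd : ∀ x : A, (∀ y : A, B x y = 0) → x = 0)
    (ri : I → (A →ₗ[QVT] A))
    (hri1 : ∀ i, ri i 1 = 0)
    (hriθ : ∀ i j, ri i (θ j) = if i = j then 1 else 0)
    (hrimul : ∀ (i : I) (x y : A) (a b : I →₀ ℕ), x ∈ 𝒜 a → y ∈ 𝒜 b →
      ri i (x * y)
        = (v ^ (-(dotF C (Finsupp.single i 1) b))
            * t ^ (pairF C b (Finsupp.single i 1) - pairF C (Finsupp.single i 1) b))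
              • (ri i x * y) + x * ri i y)
    (hadj : ∀ (i : I) (y x : A) (b : I →₀ ℕ), y ∈ 𝒜 b →
      B (y * θ i) x
        = t ^ (2 * pairF (Dmat C) b (Finsupp.single i 1))
            * B y (ri i x) * B (θ i) (θ i))
    (x : A) (ν : I →₀ ℕ) (hν : ν ≠ 0) (hx : x ∈ 𝒜 ν)
    (h0 : ∀ i, ri i x = 0) :
    x = 0 := by
  classical
  by_cases h1 : (1 : A) = 0
  · calc x = x * 1 := (mul_one x).symm
      _ = x * 0 := by rw [h1]
      _ = 0 := mul_zero x
  · obtain ⟨f₀, hf₀sup, hf₀⟩ := Vanish10.exists_rep 𝒜 θ hθ hgen ν x hx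
    have hRwx : ∀ (i : I) (L : List I), Vanish10.Rw ri (i :: L) x = 0 := by
      intro i L
      induction L generalizing i with
      | nil => exact h0 i
      | cons k L ih => rw [Vanish10.Rw_cons, ih k, map_zero]
    have hqcIter : ∀ L : List I, Vanish10.degw L = ν
        → (Vanish10.itF (Vanish10.qc C) L f₀) [] = 0 := by
      intro L hL
      obtain ⟨i, L', rfl⟩ : ∃ i L', L = i :: L' := by
        cases L with
        | nil => exact absurd (show ν = 0 from by rw [← hL]; rfl) hν
        | cons a b => exact ⟨a, b, rfl⟩
      set g := Vanish10.itF (Vanish10.qc C) (i :: L') f₀ with hg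
      have hΘF : Vanish10.ΘF θ g = 0 := by
        rw [hg, ← Vanish10.Rw_ΘF C 𝒜 θ ri hθ hri1 hriθ hrimul (i :: L') f₀, hf₀, hRwx i L']
      have hsup0 : ∀ m' ∈ g.support, Vanish10.degw m' = 0 := by
        intro m' hm'
        have h := Vanish10.itF_support (Vanish10.qc C) (i :: L') f₀ hf₀sup m' hm'
        rw [hL] at h
        have h2 : ν + Vanish10.degw m' = ν + 0 := by rw [add_zero]; exact h
        exact add_left_cancel h2
      have hgs : g = Finsupp.single ([] : List I) (g []) := by
        ext m'
        rw [Finsupp.single_apply]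
        split
        · next he => rw [← he]
        · next he =>
          apply Finsupp.notMem_support_iff.mp
          intro hmem
          exact he (Vanish10.degw_eq_zero (hsup0 m' hmem)).symm
      rw [hgs, Vanish10.ΘF_single] at hΘF
      by_contra hne
      apply h1
      have h2 := congrArg (fun z => (g [])⁻¹ • z) hΘF
      simp only [smul_smul, inv_mul_cancel₀ hne, smul_zero, one_smul] at h2
      exact h2
    have hVan : ∀ L : List I, Vanish10.degw L = ν
        → (Vanish10.itF (Vanish10.qb C) L f₀) [] = 0 := by
      intro L hL
      apply Vanish10.barIter_vanish C L f₀
      · intro m hm; rw [hf₀sup m hm, hL]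
      · intro L' hL'; exact hqcIter L' (by rw [hL', hL])
    have hword : ∀ w : List I, B x (Vanish10.Θw θ w) = 0 := by
      intro w
      rw [← hf₀, Vanish10.B_eq_opG C 𝒜 θ ri B hθ hadj f₀ (Vanish10.Θw θ w),
        Vanish10.vanishing_op C 𝒜 θ ri B hθ hri1 hriθ hrimul w ν f₀ hf₀sup hVan, map_zero]
    apply hnd
    intro z
    have hz : z ∈ Submodule.span QVT (Set.range (Vanish10.Θw θ)) := by
      rw [Vanish10.span_top θ hgen]; trivial
    induction hz using Submodule.span_induction with
    | mem a ha => obtain ⟨w, rfl⟩ := ha; exact hword w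
    | zero => exact map_zero (B x)
    | add a b _ _ iha ihb => rw [map_add, iha, ihb, add_zero]
    | smul r a _ iha => rw [map_smul, iha, smul_zero]

end
end

section
/- Let 𝐟_{v,t} be Lusztig's algebra 𝐟 associated to a Cartan datum (I,·), base-changed to ℚ(v,t), with multiplication ∘ and comultiplication r̃₁. Define x ⊙ y = t^{[|x|,|y|]} x∘y and, for r̃₁(x) = ∑ x₁⊗x₂ (homogeneous components), r₁(x) = ∑ t^{-[|x₁|,|x₂|]} x₁⊗x₂. Equip 𝐟_{v,t}⊗𝐟_{v,t} with the multiplication (x₁⊗x₂)⊙(y₁⊗y₂) = v^{-|y₁|·|x₂|} t^{⟨|y₁|,|x₂|⟩-⟨|x₂|,|y₁|⟩} (x₁⊙y₁)⊗(x₂⊙y₂). Then r₁: (𝐟_{v,t},⊙) → (𝐟_{v,t}⊗𝐟_{v,t},⊙) is an algebra homomorphism. -/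
/-!
STATEMENT 16: On 𝐟_{v,t} (Lusztig's algebra base-changed to ℚ(v,t)) with
x ⊙ y = t^{[|x|,|y|]} x∘y and r₁(x) = ∑ t^{-[|x₁|,|x₂|]} x₁⊗x₂ (where
r̃₁(x) = ∑ x₁⊗x₂), and with the twisted multiplication
(x₁⊗x₂)⊙(y₁⊗y₂) = v^{-|y₁|·|x₂|} t^{⟨|y₁|,|x₂|⟩-⟨|x₂|,|y₁|⟩} (x₁⊙y₁)⊗(x₂⊙y₂)
on 𝐟_{v,t}⊗𝐟_{v,t}, the map r₁ is an algebra homomorphism: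
r₁(x ⊙ y) = r₁(x) ⊙ r₁(y).

This is expressed on homogeneous elements x, y whose comultiplications are
expanded into finite families of homogeneous terms; r̃₁ satisfies
r̃₁(x∘y) = ∑ v^{-|x₂|·|y₁|}(x₁∘y₁)⊗(x₂∘y₂).  The left side below is
r₁(x ⊙ y) and the right side is r₁(x) ⊙ r₁(y), each written out via these
expansions.  Here ⟨i,j⟩ = C i j, [i,j] = 2δ_{ij}C i i - C i j.
-/

noncomputable section

open scoped TensorProduct

lemma pairF_eq {I : Type*} [Fintype I] (C : I → I → ℤ) (a b : I →₀ ℕ) :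
    pairF C a b = ∑ i, ∑ j, (a i : ℤ) * C i j * (b j : ℤ) := by
  unfold pairF
  rw [Finsupp.sum_fintype]
  · refine Finset.sum_congr rfl fun i _ => ?_
    rw [Finsupp.sum_fintype]
    intro j; ring
  · intro i
    rw [Finsupp.sum_fintype] <;> simp

lemma pairF_add_left {I : Type*} [Fintype I] (C : I → I → ℤ) (a b c : I →₀ ℕ) :
    pairF C (a + b) c = pairF C a c + pairF C b c := by
  simp only [pairF_eq, Finsupp.add_apply, ← Finset.sum_add_distrib]
  refine Finset.sum_congr rfl fun i _ => Finset.sum_congr rfl fun j _ => ?_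
  push_cast; ring

lemma pairF_add_right {I : Type*} [Fintype I] (C : I → I → ℤ) (a b c : I →₀ ℕ) :
    pairF C a (b + c) = pairF C a b + pairF C a c := by
  simp only [pairF_eq, Finsupp.add_apply, ← Finset.sum_add_distrib]
  refine Finset.sum_congr rfl fun i _ => Finset.sum_congr rfl fun j _ => ?_
  push_cast; ring

lemma pairF_key {I : Type*} [Fintype I] [DecidableEq I] (C : I → I → ℤ) (a b : I →₀ ℕ) :
    pairF (Dmat C) a b + pairF C a b = pairF (Dmat C) b a + pairF C b a := by
  simp only [pairF_eq, ← Finset.sum_add_distrib]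
  rw [Finset.sum_comm]
  refine Finset.sum_congr rfl fun i _ => Finset.sum_congr rfl fun j _ => ?_
  unfold Dmat
  by_cases h : i = j <;> simp [h, eq_comm] <;> ring

lemma v_ne_zero : v ≠ 0 := by
  simp [v, IsFractionRing.to_map_eq_zero_iff, MvPolynomial.X_ne_zero]

lemma t_ne_zero : t ≠ 0 := by
  simp [t, IsFractionRing.to_map_eq_zero_iff, MvPolynomial.X_ne_zero]

theorem r_one_algebra_hom {I : Type*} [Fintype I] [DecidableEq I]
    (C : I → I → ℤ)
    {A : Type*} [Ring A] [Algebra QVT A]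
    (𝒜 : (I →₀ ℕ) → Submodule QVT A) [GradedAlgebra 𝒜]
    (x y : A) (dx dy : I →₀ ℕ) (hx : x ∈ 𝒜 dx) (hy : y ∈ 𝒜 dy)
    {κ μ : Type*} [Fintype κ] [Fintype μ]
    (f1 f2 : κ → A) (βf γf : κ → (I →₀ ℕ))
    (hf1 : ∀ k, f1 k ∈ 𝒜 (βf k)) (hf2 : ∀ k, f2 k ∈ 𝒜 (γf k))
    (hfd : ∀ k, βf k + γf k = dx)
    (g1 g2 : μ → A) (βg γg : μ → (I →₀ ℕ))
    (hg1 : ∀ l, g1 l ∈ 𝒜 (βg l)) (hg2 : ∀ l, g2 l ∈ 𝒜 (γg l))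
    (hgd : ∀ l, βg l + γg l = dy)
    (rt : A →ₗ[QVT] A ⊗[QVT] A)
    (hrx : rt x = ∑ k : κ, f1 k ⊗ₜ[QVT] f2 k)
    (hry : rt y = ∑ l : μ, g1 l ⊗ₜ[QVT] g2 l)
    (hmul : rt (x * y)
      = ∑ k : κ, ∑ l : μ, (v ^ (-(dotF C (γf k) (βg l)))) •
          ((f1 k * g1 l) ⊗ₜ[QVT] (f2 k * g2 l))) :
    -- r₁(x ⊙ y):
    t ^ (pairF (Dmat C) dx dy) •
        ∑ k : κ, ∑ l : μ,
          (v ^ (-(dotF C (γf k) (βg l)))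
            * t ^ (-(pairF (Dmat C) (βf k + βg l) (γf k + γg l)))) •
            ((f1 k * g1 l) ⊗ₜ[QVT] (f2 k * g2 l))
      -- = r₁(x) ⊙ r₁(y):
      = ∑ k : κ, ∑ l : μ,
          (t ^ (-(pairF (Dmat C) (βf k) (γf k)) - pairF (Dmat C) (βg l) (γg l))
            * v ^ (-(dotF C (βg l) (γf k)))
            * t ^ (pairF C (βg l) (γf k) - pairF C (γf k) (βg l))
            * t ^ (pairF (Dmat C) (βf k) (βg l) + pairF (Dmat C) (γf k) (γg l))) •
            ((f1 k * g1 l) ⊗ₜ[QVT] (f2 k * g2 l)) := by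
  rw [Finset.smul_sum]
  refine Finset.sum_congr rfl fun k _ => ?_
  rw [Finset.smul_sum]
  refine Finset.sum_congr rfl fun l _ => ?_
  rw [smul_smul]
  congr 1
  have hd : dotF C (γf k) (βg l) = dotF C (βg l) (γf k) := by
    unfold dotF; ring
  rw [hd, mul_comm (t ^ pairF (Dmat C) dx dy) _, mul_assoc, ← zpow_add₀ t_ne_zero,
    mul_assoc, mul_assoc, mul_left_comm, ← zpow_add₀ t_ne_zero, ← zpow_add₀ t_ne_zero]
  congr 1
  have h1 := hfd k
  have h2 := hgd l
  have key := pairF_key C (γf k) (βg l)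
  rw [← h1, ← h2] at *
  simp only [pairF_add_left, pairF_add_right] at *
  congr 1
  linarith

end
end

section
/- Every element b of the canonical signed basis 𝓑 of the two-parameter algebra f lies in 𝐟 ⊗ 1 ⊂ f = 𝐟 ⊗_{ℚ(v)} ℚ(v,t): if x ∈ f satisfies x ∈ _𝔄f, x̄ = x, and (x,x) ∈ 1 + v^{-1}ℤ[[v^{-1}]], and x is written as x = ∑_{b} b·t^{n_b} with b ranging over a ℚ(v)-basis of 𝐟⊗1 on which the form is the one-parameter form, then all n_b with b contributing nontrivially must equal 0. -/
/-!
STATEMENT 19: Every element of the canonical signed basis 𝓑 of the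
two-parameter algebra f lies in 𝐟 ⊗ 1 ⊂ f = 𝐟 ⊗_{ℚ(v)} ℚ(v,t): if x ∈ f is
integral, bar-invariant, satisfies (x,x) ∈ 1 + v⁻¹ℤ[[v⁻¹]], and is written as
x = ∑_b b·t^{n_b} with b ranging over a ℚ(v)-basis of 𝐟⊗1 on which the form
is the one-parameter (almost orthonormal) form, then all contributing n_b are
zero.

We model ℚ(v,t) as ℚ(v)(t), with the basis indexed by a type β (support a
finite set s), exponents n : β → ℤ, and one-parameter form values
P b b' ∈ δ_{bb'} + v⁻¹ℤ[[v⁻¹]] in ℚ(v); then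
(x,x) = ∑_{b,b'∈s} t^{n_b+n_{b'}} P(b,b'), and the hypothesis
(x,x) ∈ 1 + v⁻¹ℤ[[v⁻¹]] (in particular (x,x) is t-free) forces n_b = 0 for
all b ∈ s.  Membership in ℤ[[v⁻¹]] is expressed through the Laurent expansion
at 0 of the rational function after the substitution v ↦ v⁻¹.
-/

noncomputable section

/-- ℚ(v). -/
abbrev Qv := RatFunc ℚ

/-- ℚ(v,t) = ℚ(v)(t). -/
abbrev Qvt := RatFunc Qv

/-- The indeterminate v. -/
def vQ : Qv := RatFunc.X

/-- The indeterminate t. -/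
def tQ : Qvt := RatFunc.X

/-- The substitution v ↦ v⁻¹, as a ring endomorphism of ℚ(v). -/
def subinv : Qv →+* Qv :=
  IsFractionRing.lift
    (g := ((Polynomial.aeval (vQ⁻¹ : Qv)).toRingHom : Polynomial ℚ →+* Qv))
    (by
      have hX : Transcendental ℚ (RatFunc.X : RatFunc ℚ) := by
        have h1 : Transcendental ℚ (Polynomial.X : Polynomial ℚ) :=
          Polynomial.transcendental_X ℚ
        have h2 := (transcendental_algebraMap_iff
          (R := ℚ) (S := Polynomial ℚ) (A := RatFunc ℚ)
          (IsFractionRing.injective (Polynomial ℚ) (RatFunc ℚ))).2 h1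
        simpa [RatFunc.algebraMap_X] using h2
      have hinv : Transcendental ℚ (vQ⁻¹ : Qv) := by
        intro h
        exact hX (IsAlgebraic.inv_iff.mp (by simpa [vQ] using h))
      exact transcendental_iff_injective.mp hinv)

/-- g ∈ v⁻¹ℤ[[v⁻¹]]: the Laurent expansion of g(v⁻¹) at 0 has integer
coefficients and only strictly positive powers. -/
def memSmall (g : Qv) : Prop :=
  (∀ k : ℤ, k ≤ 0 → ((subinv g : Qv) : LaurentSeries ℚ).coeff k = 0) ∧
    (∀ k : ℤ, ∃ m : ℤ, ((subinv g : Qv) : LaurentSeries ℚ).coeff k = (m : ℚ))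

/-- g ∈ 1 + v⁻¹ℤ[[v⁻¹]]. -/
def memOne (g : Qv) : Prop := ∃ h : Qv, memSmall h ∧ g = 1 + h

/-
The coefficient of `t^k` in `(x,x)` is `∑_{n_b + n_{b'} = k} P(b,b')`. Taking the constant term
of the expansion in powers of `v⁻¹` kills the off-diagonal entries and sends the diagonal ones to
`1`, so it turns this coefficient into the number of `b` with `2 n_b = k`. As `(x,x)` is free of
`t`, that number vanishes for every `k ≠ 0`, whereas each `b` is counted at `k = 2 n_b`.
-/

open Finset

theorem RatFunc.coe_C {K : Type*} [Field K] (a : K) :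
    ((C a : RatFunc K) : LaurentSeries K) = HahnSeries.C a := by
  rw [← algebraMap_C, ← IsScalarTower.algebraMap_apply]
  simp

theorem RatFunc.coe_X_zpow_mul_C {K : Type*} [Field K] (j : ℤ) (a : K) :
    ((X ^ j * C a : RatFunc K) : LaurentSeries K) = HahnSeries.single j a := by
  rw [map_mul, map_zpow₀, coe_X, coe_C, ← single_zpow, HahnSeries.C_apply,
    HahnSeries.single_mul_single, add_zero, one_mul]

theorem RatFunc.sum_ite_eq_zero_of_sum_X_zpow_mul_C_eq_C {K ι : Type*} [Field K]
    {u : Finset ι} {e : ι → ℤ} {a : ι → K} {c : K}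
    (h : ∑ i ∈ u, X ^ e i * C (a i) = C c) {k : ℤ} (hk : k ≠ 0) :
    ∑ i ∈ u, (if e i = k then a i else 0) = 0 := by
  have hcoeff := congrArg (fun f : RatFunc K => (f : LaurentSeries K).coeff k) h
  simp only [map_sum, HahnSeries.coeff_sum, coe_X_zpow_mul_C, coe_C, HahnSeries.C_apply,
    HahnSeries.coeff_single, if_neg hk] at hcoeff
  exact (sum_congr rfl fun i _ => by simp only [eq_comm]; congr).trans hcoeff

def constCoeffAtInfty : Qv →+ ℚ :=
  AddMonoidHom.mk' (fun g => ((subinv g : Qv) : LaurentSeries ℚ).coeff 0)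
    (fun a b => by simp [map_add, HahnSeries.coeff_add])

theorem constCoeffAtInfty_eq_zero_of_memSmall {g : Qv} (h : memSmall g) :
    constCoeffAtInfty g = 0 :=
  h.1 0 le_rfl

theorem constCoeffAtInfty_eq_one_of_memOne {g : Qv} (h : memOne g) :
    constCoeffAtInfty g = 1 := by
  obtain ⟨g', hg', rfl⟩ := h
  have hone : constCoeffAtInfty 1 = 1 := by
    simp [constCoeffAtInfty, HahnSeries.coeff_one]
  rw [map_add, hone, constCoeffAtInfty_eq_zero_of_memSmall hg', add_zero]

section DiagonalCount

variable {β A R : Type*} [AddCommMonoid A] [AddCommMonoidWithOne R]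
  (φ : A →+ R) (s : Finset β) (n : β → ℤ) (P : β → β → A)

theorem map_sum_ite_add_eq_card (hdiag : ∀ b, φ (P b b) = 1)
    (hoff : ∀ b b', b ≠ b' → φ (P b b') = 0) (k : ℤ) :
    φ (∑ p ∈ s ×ˢ s, if n p.1 + n p.2 = k then P p.1 p.2 else 0) = #{b ∈ s | n b + n b = k} := by
  rw [map_sum, sum_product, ← sum_boole]
  refine sum_congr rfl fun b hb => ?_
  rw [sum_eq_single_of_mem b hb fun b' _ hb' => by simp [apply_ite φ, hoff b b' hb'.symm]]
  simp [apply_ite φ, hdiag]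

theorem eq_zero_of_sum_ite_add_eq_zero [CharZero R] (hdiag : ∀ b, φ (P b b) = 1)
    (hoff : ∀ b b', b ≠ b' → φ (P b b') = 0)
    (h : ∀ k ≠ 0, ∑ p ∈ s ×ˢ s, (if n p.1 + n p.2 = k then P p.1 p.2 else 0) = 0) :
    ∀ b ∈ s, n b = 0 := by
  intro b hb
  by_contra hb0
  have hcount := map_sum_ite_add_eq_card φ s n P hdiag hoff (n b + n b)
  rw [h _ (by omega), map_zero] at hcount
  have hmem : b ∈ {c ∈ s | n c + n c = n b + n b} := mem_filter.2 ⟨hb, rfl⟩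
  exact card_ne_zero_of_mem hmem (by exact_mod_cast hcount.symm)

end DiagonalCount

theorem canonical_signed_basis_t_free_general {β : Type*}
    (s : Finset β) (n : β → ℤ) (P : β → β → Qv)
    (hPdiag : ∀ b, memOne (P b b))
    (hPoff : ∀ b b', b ≠ b' → memSmall (P b b'))
    (hxx : ∃ g : Qv, memOne g ∧
      (∑ b ∈ s, ∑ b' ∈ s, tQ ^ (n b + n b') * RatFunc.C (P b b'))
        = RatFunc.C g) :
    ∀ b ∈ s, n b = 0 := by
  obtain ⟨g, -, hsum⟩ := hxx
  rw [← sum_product'] at hsum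
  exact eq_zero_of_sum_ite_add_eq_zero constCoeffAtInfty s n P
    (fun b => constCoeffAtInfty_eq_one_of_memOne (hPdiag b))
    (fun b b' hbb' => constCoeffAtInfty_eq_zero_of_memSmall (hPoff b b' hbb'))
    (fun _ hk => RatFunc.sum_ite_eq_zero_of_sum_X_zpow_mul_C_eq_C hsum hk)

theorem canonical_signed_basis_t_free {β : Type*} [DecidableEq β]
    (s : Finset β) (n : β → ℤ) (P : β → β → Qv)
    (hPsym : ∀ b b', P b b' = P b' b)
    (hPdiag : ∀ b, memOne (P b b))
    (hPoff : ∀ b b', b ≠ b' → memSmall (P b b'))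
    (hxx : ∃ g : Qv, memOne g ∧
      (∑ b ∈ s, ∑ b' ∈ s, tQ ^ (n b + n b') * RatFunc.C (P b b'))
        = RatFunc.C g) :
    ∀ b ∈ s, n b = 0 :=
  canonical_signed_basis_t_free_general s n P hPdiag hPoff hxx

end
end
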